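/- arXiv:1804.02326 — 3 statements merged into one kernel-verified Lean document; each statement's English description precedes it below -/
import Mathlib

section
/- Let g be a Lie algebra over a field K, and let h and a be Lie subalgebras of g. Define b = {X ∈ a : for all H ∈ h, [X,H] lies in the submodule sum a + h}. Then for all X, Y in the submodule sum h + b, the bracket [X,Y] lies in the submodule sum h + a. -/
/-- The set `b = {X ∈ a : ∀ H ∈ h, ⁅X, H⁆ ∈ a + h}`, as a submodule of `g`. -/
def cartanStep {K : Type*} [Field K] {g : Type*} [LieRing g] [LieAlgebra K g]
    (h a : LieSubalgebra K g) : Submodule K g where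
  carrier := {x | x ∈ a ∧ ∀ H ∈ h, ⁅x, H⁆ ∈ a.toSubmodule ⊔ h.toSubmodule}
  add_mem' := by
    rintro x y ⟨hxa, hxb⟩ ⟨hya, hyb⟩
    refine ⟨a.add_mem hxa hya, fun H hH => ?_⟩
    rw [add_lie]
    exact Submodule.add_mem _ (hxb H hH) (hyb H hH)
  zero_mem' := ⟨a.zero_mem, fun H hH => by
    rw [zero_lie]; exact Submodule.zero_mem _⟩
  smul_mem' := by
    rintro c x ⟨hxa, hxb⟩
    refine ⟨a.smul_mem c hxa, fun H hH => ?_⟩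
    rw [smul_lie]
    exact Submodule.smul_mem _ c (hxb H hH)

/-- Proposition 2.2 of the paper: if `b = {X ∈ a : [X, h] ⊆ a + h}`, then
`[h + b, h + b] ⊆ h + a`. -/
theorem bracket_mem_sup_of_mem_sup_cartanStep
    {K : Type*} [Field K] {g : Type*} [LieRing g] [LieAlgebra K g]
    (h a : LieSubalgebra K g) (X Y : g)
    (hX : X ∈ h.toSubmodule ⊔ cartanStep h a)
    (hY : Y ∈ h.toSubmodule ⊔ cartanStep h a) :
    ⁅X, Y⁆ ∈ h.toSubmodule ⊔ a.toSubmodule := by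
  obtain ⟨xh, hxh, xb, hxb, rfl⟩ := Submodule.mem_sup.mp hX
  obtain ⟨yh, hyh, yb, hyb, rfl⟩ := Submodule.mem_sup.mp hY
  have key : ∀ z w : g, z ∈ cartanStep h a → w ∈ h →
      ⁅z, w⁆ ∈ h.toSubmodule ⊔ a.toSubmodule := by
    intro z w hz hw
    have := hz.2 w hw
    rwa [sup_comm] at this
  rw [add_lie, lie_add, lie_add]
  refine Submodule.add_mem _ (Submodule.add_mem _ ?_ ?_) (Submodule.add_mem _ ?_ ?_)
  · exact Submodule.mem_sup_left (h.lie_mem hxh hyh)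
  · have : ⁅yb, xh⁆ ∈ h.toSubmodule ⊔ a.toSubmodule := key yb xh hyb hxh
    rw [← neg_mem_iff] at this
    rwa [← lie_skew]
  · exact key xb yh hxb hyh
  · exact Submodule.mem_sup_right (a.lie_mem hxb.1 hyb.1)
end

section
/- Let n ≥ 1, 0 ≤ q ≤ n, p = n − q, let I = diag(1,…,1,−1,…,−1) (p entries +1, q entries −1), and let Q = {(x', x_{n+1}) ∈ ℝⁿ × ℝ : x_{n+1} = x'ᵀ I x'}. An invertible linear map L of ℝ^{n+1} satisfies L(Q) = Q if and only if there exist A ∈ GL_n(ℝ) and λ ∈ ℝ, λ ≠ 0, with Aᵀ I A = λ I, such that L(x', x_{n+1}) = (A x', λ x_{n+1}) for all (x', x_{n+1}). -/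
open Matrix

/-- The diagonal matrix `diag(1,…,1,−1,…,−1)` with `p` entries `+1` followed by
`n − p` entries `−1`. -/
def signMat' (n p : ℕ) : Matrix (Fin n) (Fin n) ℝ :=
  Matrix.diagonal fun i => if (i : ℕ) < p then 1 else -1

/-- The quadric `{(x', x_{n+1}) ∈ ℝⁿ × ℝ : x_{n+1} = x'ᵀ I x'}`. -/
def quadricGraph (n p : ℕ) : Set ((Fin n → ℝ) × ℝ) :=
  {w | w.2 = w.1 ⬝ᵥ (signMat' n p).mulVec w.1}

/-!
Write `L (x, t) = (F x + t b, g x + t λ)` and `Q x = B x x`. Every point `(s x, s² Q x)` lies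
on the quadric, so membership of its image is a polynomial identity of degree four in `s`; its
coefficients give `g = 0`, `Q ∘ F = λ Q` and `Q x · B (F x) b = 0`. Since a nondegenerate
symmetric form has an orthogonal basis of anisotropic vectors, the last identity gives
`B (F x) b = 0` for all `x`; `F` is onto because `L` is, so nondegeneracy forces `b = 0`.
Polarization upgrades `Q ∘ F = λ Q` to `B (F x) (F y) = λ B x y`, and conversely such
block-diagonal maps preserve the quadric.
-/

theorem eq_zero_of_forall_quartic_eq_zero {K : Type*} [Field K] [CharZero K] {c₁ c₂ c₃ c₄ : K}
    (h : ∀ s : K, c₁ * s + c₂ * s ^ 2 + c₃ * s ^ 3 + c₄ * s ^ 4 = 0) :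
    c₁ = 0 ∧ c₂ = 0 ∧ c₃ = 0 ∧ c₄ = 0 := by
  have h₁ := h 1
  have h₂ := h (-1)
  have h₃ := h 2
  have h₄ := h (-2)
  have e₁ : (12 : K) * c₁ = 0 := by linear_combination 8 * h₁ - 8 * h₂ - h₃ + h₄
  have e₂ : (24 : K) * c₂ = 0 := by linear_combination 16 * h₁ + 16 * h₂ - h₃ - h₄
  have e₃ : (12 : K) * c₃ = 0 := by linear_combination -2 * h₁ + 2 * h₂ + h₃ - h₄
  have e₄ : (24 : K) * c₄ = 0 := by linear_combination -4 * h₁ - 4 * h₂ + h₃ + h₄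
  exact ⟨by simpa using e₁, by simpa using e₂, by simpa using e₃, by simpa using e₄⟩

open LinearMap (BilinForm)

namespace LinearMap.BilinForm

variable {K V : Type*} [Field K] [AddCommGroup V] [Module K V]

def quadraticGraph (B : BilinForm K V) : Set (V × K) :=
  {w | w.2 = B w.1 w.1}

variable {B : BilinForm K V}

@[simp]
theorem mem_quadraticGraph {w : V × K} : w ∈ B.quadraticGraph ↔ w.2 = B w.1 w.1 := Iff.rfl

theorem identities_of_mapsTo_quadraticGraph [CharZero K] {L : V × K →ₗ[K] V × K}
    (hL : Set.MapsTo L B.quadraticGraph B.quadraticGraph) (x : V) :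
    (L (x, 0)).2 = 0 ∧ B (L (x, 0)).1 (L (x, 0)).1 = (L (0, 1)).2 * B x x ∧
      B x x * (B (L (x, 0)).1 (L (0, 1)).1 + B (L (0, 1)).1 (L (x, 0)).1) = 0 := by
  set u := (L (x, 0)).1
  set b := (L (0, 1)).1
  set q := B x x
  have hcurve (s : K) : s * (L (x, 0)).2 + s ^ 2 * q * (L (0, 1)).2 =
      s ^ 2 * B u u + s ^ 3 * q * (B u b + B b u) + s ^ 4 * q ^ 2 * B b b := by
    have hmem := hL (x := (s • x, s ^ 2 * q)) (by simp [q]; ring)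
    rw [show ((s • x, s ^ 2 * q) : V × K) = s • (x, 0) + (s ^ 2 * q) • (0, 1) by simp,
      map_add, map_smul, map_smul] at hmem
    simp only [mem_quadraticGraph, Prod.fst_add, Prod.snd_add, Prod.smul_fst, Prod.smul_snd,
      map_add, map_smul, LinearMap.add_apply, LinearMap.smul_apply, smul_eq_mul] at hmem
    linear_combination hmem
  obtain ⟨h₁, h₂, h₃, -⟩ := eq_zero_of_forall_quartic_eq_zero (c₁ := (L (x, 0)).2)
    (c₂ := q * (L (0, 1)).2 - B u u) (c₃ := -q * (B u b + B b u)) (c₄ := -q ^ 2 * B b b)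
    fun s => by linear_combination hcurve s
  exact ⟨h₁, by linear_combination -h₂, by linear_combination -h₃⟩

theorem span_setOf_apply_self_ne_zero [NeZero (2 : K)] [FiniteDimensional K V] (hB : B.IsSymm)
    (hsep : B.SeparatingLeft) : Submodule.span K {x | B x x ≠ 0} = ⊤ := by
  let : Invertible (2 : K) := invertibleOfNonzero two_ne_zero
  obtain ⟨v, hv⟩ := exists_orthogonal_basis (isSymm_iff.mp hB)
  refine eq_top_iff.mpr (v.span_eq ▸ Submodule.span_mono ?_)
  rintro _ ⟨i, rfl⟩
  exact hv.not_isOrtho_basis_self_of_separatingLeft hsep i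

theorem IsSymm.apply_apply_eq_of_apply_self [NeZero (2 : K)] (hB : B.IsSymm) {F : V →ₗ[K] V}
    {c : K} (hF : ∀ x, B (F x) (F x) = c * B x x) (x y : V) :
    B (F x) (F y) = c * B x y := by
  rw [hB.polarization, hB.polarization x y, ← map_add, hF, hF, hF]
  ring

theorem image_quadraticGraph_eq_of_apply_eq {L : (V × K) ≃ₗ[K] (V × K)} {F : V →ₗ[K] V}
    {c : K} (hc : c ≠ 0) (hF : ∀ x, B (F x) (F x) = c * B x x)
    (hL : ∀ w, L w = (F w.1, c * w.2)) : L '' B.quadraticGraph = B.quadraticGraph := by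
  have hpre : L ⁻¹' B.quadraticGraph = B.quadraticGraph := by
    ext w
    simp [hL, hF, hc]
  nth_rw 1 [← hpre]
  exact Set.image_preimage_eq _ L.surjective

theorem exists_apply_eq_of_image_quadraticGraph_eq [CharZero K] [FiniteDimensional K V]
    (hB : B.IsSymm) (hsep : B.SeparatingLeft) {L : (V × K) ≃ₗ[K] (V × K)}
    (hL : L '' B.quadraticGraph = B.quadraticGraph) :
    ∃ (F : V →ₗ[K] V) (c : K), c ≠ 0 ∧ (∀ x y, B (F x) (F y) = c * B x y) ∧
      ∀ w, L w = (F w.1, c * w.2) := by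
  have hid := identities_of_mapsTo_quadraticGraph (L := L.toLinearMap)
    (hL ▸ Set.mapsTo_image L B.quadraticGraph)
  simp only [LinearEquiv.coe_coe] at hid
  set F : V →ₗ[K] V := LinearMap.fst K V K ∘ₗ L.toLinearMap ∘ₗ LinearMap.inl K V K
  set b := (L (0, 1)).1
  set c := (L (0, 1)).2
  have hdecomp (w : V × K) : L w = (F w.1 + w.2 • b, c * w.2) := by
    rw [show w = (w.1, 0) + w.2 • (0, 1) by simp, map_add, map_smul]
    ext <;> simp [F, b, c, (hid w.1).1, mul_comm]
  have hc : c ≠ 0 := by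
    intro hc0
    obtain ⟨w, hw⟩ := L.surjective (0, 1)
    simpa [hdecomp, hc0] using congrArg Prod.snd hw
  have hFsurj : Function.Surjective F := by
    intro y
    obtain ⟨w, hw⟩ := L.surjective (y, 0)
    obtain ⟨hw₁, hw₂⟩ := Prod.ext_iff.mp ((hdecomp w).symm.trans hw)
    have hw0 : w.2 = 0 := by simpa [hc] using hw₂
    exact ⟨w.1, by simpa [hw0] using hw₁⟩
  have hb : b = 0 := by
    have horth : B b ∘ₗ F = 0 := by
      refine LinearMap.ext_on (span_setOf_apply_self_ne_zero hB hsep) fun x hx => ?_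
      have h := (mul_eq_zero.mp (hid x).2.2).resolve_left hx
      rw [hB.eq _ b] at h
      simpa [F] using h
    refine hsep b fun y => ?_
    obtain ⟨x, rfl⟩ := hFsurj y
    simpa using LinearMap.congr_fun horth x
  refine ⟨F, c, hc, hB.apply_apply_eq_of_apply_self fun x => (hid x).2.1, fun w => ?_⟩
  simpa [hb] using hdecomp w

theorem image_quadraticGraph_eq_iff [CharZero K] [FiniteDimensional K V] (hB : B.IsSymm)
    (hsep : B.SeparatingLeft) (L : (V × K) ≃ₗ[K] (V × K)) :
    L '' B.quadraticGraph = B.quadraticGraph ↔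
      ∃ (F : V →ₗ[K] V) (c : K), c ≠ 0 ∧ (∀ x y, B (F x) (F y) = c * B x y) ∧
        ∀ w, L w = (F w.1, c * w.2) :=
  ⟨exists_apply_eq_of_image_quadraticGraph_eq hB hsep, fun ⟨_, _, hc, hF, hL⟩ =>
    image_quadraticGraph_eq_of_apply_eq hc (fun x => hF x x) hL⟩

end LinearMap.BilinForm

theorem Matrix.transpose_mul_mul_eq_smul_iff {ι K : Type*} [Fintype ι] [DecidableEq ι]
    [CommRing K] {M A : Matrix ι ι K} {c : K} :
    Aᵀ * M * A = c • M ↔ ∀ x y, M.toBilin' (A *ᵥ x) (A *ᵥ y) = c * M.toBilin' x y := by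
  rw [← Matrix.toBilin'.injective.eq_iff, ← Matrix.toBilin'_comp, map_smul, LinearMap.ext_iff₂]
  simp

theorem signMat'_separatingLeft (n p : ℕ) : (signMat' n p).SeparatingLeft := by
  rw [Matrix.separatingLeft_iff_det_ne_zero, signMat', det_diagonal, Finset.prod_ne_zero_iff]
  intro i _
  split <;> norm_num

theorem quadraticGraph_toBilin'_signMat' (n p : ℕ) :
    (signMat' n p).toBilin'.quadraticGraph = quadricGraph n p := by
  ext w
  simp [quadricGraph, Matrix.toBilin'_apply']

theorem quadric_linear_isotropy_general (n : ℕ) (p : ℕ)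
    (L : ((Fin n → ℝ) × ℝ) ≃ₗ[ℝ] ((Fin n → ℝ) × ℝ)) :
    (⇑L '' quadricGraph n p = quadricGraph n p) ↔
      ∃ (A : Matrix (Fin n) (Fin n) ℝ) (lam : ℝ), IsUnit A ∧ lam ≠ 0 ∧
        Aᵀ * signMat' n p * A = lam • signMat' n p ∧
        ∀ w : (Fin n → ℝ) × ℝ, L w = (A.mulVec w.1, lam * w.2) := by
  rw [← quadraticGraph_toBilin'_signMat', LinearMap.BilinForm.image_quadraticGraph_eq_iff
    (isSymm_toBilin'_iff_isSymm.mpr (isSymm_diagonal _))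
    (separatingLeft_toBilin'_iff.mpr (signMat'_separatingLeft n p))]
  constructor
  · rintro ⟨F, c, hc, hF, hL⟩
    have hinj : Function.Injective F := (injective_iff_map_eq_zero F).mpr fun x hx => by
      simpa using L.injective (show L (x, 0) = L 0 by simp [hL, hx])
    exact ⟨F.toMatrix', c, mulVec_injective_iff_isUnit.mp
      (by rwa [show F.toMatrix'.mulVec = F from funext F.toMatrix'_mulVec]), hc,
      transpose_mul_mul_eq_smul_iff.mpr (by simpa using hF), by simpa using hL⟩
  · rintro ⟨A, c, -, hc, hA, hL⟩
    exact ⟨A.toLin', c, hc, by simpa using transpose_mul_mul_eq_smul_iff.mp hA, by simpa using hL⟩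

/-- The linear isotropy of the quadric: an invertible linear map `L` of `ℝ^{n+1}` preserves
the quadric iff `L(x', x_{n+1}) = (A x', λ x_{n+1})` with `A ∈ GL_n(ℝ)`, `λ ≠ 0` and
`Aᵀ I A = λ I`. -/
theorem quadric_linear_isotropy (n q : ℕ) (hn : 1 ≤ n) (hq : q ≤ n) (p : ℕ)
    (hp : p = n - q) (L : ((Fin n → ℝ) × ℝ) ≃ₗ[ℝ] ((Fin n → ℝ) × ℝ)) :
    (⇑L '' quadricGraph n p = quadricGraph n p) ↔
      ∃ (A : Matrix (Fin n) (Fin n) ℝ) (lam : ℝ), IsUnit A ∧ lam ≠ 0 ∧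
        Aᵀ * signMat' n p * A = lam • signMat' n p ∧
        ∀ w : (Fin n → ℝ) × ℝ, L w = (A.mulVec w.1, lam * w.2) :=
  quadric_linear_isotropy_general n p L
end

section
/- Let n ≥ 3 and Γ = {x ∈ ℝ^{n+1} : x_1 > 0 and x_{n+1} = x_1 x_2 + x_1 Σ_{j=3}^n x_j²}. For q > 0, t ∈ ℝ, s = (s_3,…,s_n) ∈ ℝ^{n−2}, define the affine map H_{q,t,s}(x) = (q x_1, x_2 − 2Σ_{j=3}^n s_j x_j + t, x_3 + s_3, …, x_n + s_n, q(x_{n+1} + x_1 Σ_{j=3}^n s_j² + t x_1)). Then (i) each H_{q,t,s} maps Γ bijectively onto Γ, and (ii) for every x ∈ Γ there exist unique q > 0, t ∈ ℝ, s ∈ ℝ^{n−2} such that H_{q,t,s}(1,0,…,0) = x. In particular this group of affine maps acts simply transitively on Γ. -/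
/-!
The maps `H_{q,t,s}` compose like the parameters under the group law
`(q, t, s) · (q', t', s') = (q q', t + t' - 2⟨s, s'⟩, s + s')` with unit `(1, 0, 0)`, so every
`H_{q,t,s}` is invertible with inverse `H_{q⁻¹, -t - 2|s|², -s}`. For `q > 0` both preserve `Γ`:
in `|x + s|² = |x|² + 2⟨s, x⟩ + |s|²` the cross term is cancelled by the shift of `x₂` and `|s|²`
by the term `x₁|s|²` of the last coordinate. Finally `H_{q,t,s}(1, 0, …, 0) = (q, t, s, q(t + |s|²))`,
so the parameters are read off from the first `n` coordinates of a point of `Γ`, and its last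
coordinate is then forced by the equation of `Γ`.
-/

/-- The hypersurface `Γ = {x ∈ ℝ^{n+1} : x₁ > 0, x_{n+1} = x₁x₂ + x₁ Σ_{j=3}^n x_j²}`
(coordinates are 0-indexed: `x₁ = x 0`, `x₂ = x 1`, `x_j = x (j-1)`, `x_{n+1} = x n`). -/
def gammaSurf (n : ℕ) (hn : 3 ≤ n) : Set (Fin (n + 1) → ℝ) :=
  {x | 0 < x 0 ∧ x (Fin.last n) = x 0 * x ⟨1, by omega⟩ +
    x 0 * ∑ j : Fin (n + 1), (if 2 ≤ (j : ℕ) ∧ (j : ℕ) < n then x j ^ 2 else 0)}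

def Hmap (n : ℕ) (q t : ℝ) (s : Fin (n - 2) → ℝ) (x : Fin (n + 1) → ℝ) :
    Fin (n + 1) → ℝ := fun i =>
  if h0 : (i : ℕ) = 0 then q * x i
  else if h1 : (i : ℕ) = 1 then
    x i - 2 * (∑ j : Fin (n - 2), s j * x ⟨(j : ℕ) + 2, by have := j.isLt; omega⟩) + t
  else if h2 : (i : ℕ) = n then
    q * (x i + x 0 * (∑ j : Fin (n - 2), s j ^ 2) + t * x 0)
  else x i + s ⟨(i : ℕ) - 2, by have := i.isLt; omega⟩

lemma sum_add_sq {ι R : Type*} [CommSemiring R] (u : Finset ι) (f g : ι → R) :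
    ∑ i ∈ u, (f i + g i) ^ 2 = ∑ i ∈ u, f i ^ 2 + 2 * ∑ i ∈ u, f i * g i + ∑ i ∈ u, g i ^ 2 := by
  simp only [add_sq, Finset.sum_add_distrib, Finset.mul_sum, mul_assoc]

section

variable {n : ℕ}

/-- The index of the paper's coordinate `x_{j+3}`, the one shifted by `s_{j+3}`. -/
def innerIdx (j : Fin (n - 2)) : Fin (n + 1) := ⟨j + 2, by omega⟩

@[simp] lemma innerIdx_val (j : Fin (n - 2)) : (innerIdx j : ℕ) = j + 2 := rfl

@[simp] lemma innerIdx_ne_zero (j : Fin (n - 2)) : innerIdx j ≠ 0 := by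
  simp [Fin.ext_iff]

lemma innerIdx_injective : Function.Injective (innerIdx (n := n)) :=
  fun _ _ h => Fin.ext (by simpa using congrArg Fin.val h)

lemma eq_zero_or_one_or_last_or_innerIdx (hn : 3 ≤ n) (i : Fin (n + 1)) :
    i = 0 ∨ i = ⟨1, by omega⟩ ∨ i = Fin.last n ∨ ∃ j, i = innerIdx j := by
  obtain ⟨i, hi⟩ := i
  rcases Nat.lt_or_ge i 2 with h | h
  · interval_cases i
    · exact Or.inl rfl
    · exact Or.inr (Or.inl rfl)
  rcases eq_or_ne i n with rfl | h'
  · exact Or.inr (Or.inr (Or.inl rfl))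
  · exact Or.inr (Or.inr (Or.inr ⟨⟨i - 2, by omega⟩, Fin.ext (by simp; omega)⟩))

lemma sum_ite_inner_eq {M : Type*} [AddCommMonoid M] (f : Fin (n + 1) → M) :
    (∑ i : Fin (n + 1), if 2 ≤ (i : ℕ) ∧ (i : ℕ) < n then f i else 0)
      = ∑ j : Fin (n - 2), f (innerIdx j) := by
  refine (Finset.sum_of_injOn innerIdx innerIdx_injective.injOn (by simp) ?_ ?_).symm
  · rintro i - hi
    exact if_neg fun ⟨h2, hn⟩ => hi ⟨⟨i - 2, by omega⟩, by simp, Fin.ext (by simp; omega)⟩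
  · intro j _
    rw [if_pos (by simp; omega)]

lemma mem_gammaSurf_iff (hn : 3 ≤ n) (x : Fin (n + 1) → ℝ) :
    x ∈ gammaSurf n hn ↔ 0 < x 0 ∧
      x (Fin.last n) = x 0 * x ⟨1, by omega⟩ + x 0 * ∑ j, x (innerIdx j) ^ 2 := by
  rw [gammaSurf, Set.mem_ofPred_eq, sum_ite_inner_eq]

section Apply

variable (q t : ℝ) (s : Fin (n - 2) → ℝ) (x : Fin (n + 1) → ℝ)

@[simp] lemma Hmap_apply_zero : Hmap n q t s x 0 = q * x 0 := by
  simp [Hmap]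

@[simp] lemma Hmap_apply_one (hn : 3 ≤ n) :
    Hmap n q t s x ⟨1, by omega⟩ = x ⟨1, by omega⟩ - 2 * ∑ j, s j * x (innerIdx j) + t := by
  simp only [Hmap, one_ne_zero, ↓reduceDIte]; rfl

@[simp] lemma Hmap_apply_last (hn : 3 ≤ n) :
    Hmap n q t s x (Fin.last n) = q * (x (Fin.last n) + x 0 * ∑ j, s j ^ 2 + t * x 0) := by
  simp [Hmap, show n ≠ 0 by omega, show n ≠ 1 by omega]

@[simp] lemma Hmap_apply_innerIdx (j : Fin (n - 2)) :
    Hmap n q t s x (innerIdx j) = x (innerIdx j) + s j := by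
  have := j.isLt
  simp [Hmap, show (j : ℕ) + 2 ≠ n by omega]

end Apply

lemma Hmap_Hmap (hn : 3 ≤ n) (q t q' t' : ℝ) (s s' : Fin (n - 2) → ℝ) (x : Fin (n + 1) → ℝ) :
    Hmap n q t s (Hmap n q' t' s' x) =
      Hmap n (q * q') (t + t' - 2 * ∑ j, s j * s' j) (s + s') x := by
  funext i
  rcases eq_zero_or_one_or_last_or_innerIdx hn i with rfl | rfl | rfl | ⟨j, rfl⟩
  · simp [mul_assoc]
  · simp only [hn, Hmap_apply_one, Hmap_apply_innerIdx, Pi.add_apply, mul_add, add_mul,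
      Finset.sum_add_distrib, Finset.mul_sum]
    ring
  · simp only [hn, Hmap_apply_last, Hmap_apply_zero, Pi.add_apply, sum_add_sq]
    ring
  · simp only [Hmap_apply_innerIdx, Pi.add_apply]
    ring

lemma Hmap_one_zero_zero (hn : 3 ≤ n) (x : Fin (n + 1) → ℝ) : Hmap n 1 0 0 x = x := by
  funext i
  rcases eq_zero_or_one_or_last_or_innerIdx hn i with rfl | rfl | rfl | ⟨j, rfl⟩ <;> simp [hn]

lemma Hmap_inv_Hmap (hn : 3 ≤ n) {q : ℝ} (hq : q ≠ 0) (t : ℝ) (s : Fin (n - 2) → ℝ)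
    (x : Fin (n + 1) → ℝ) :
    Hmap n q⁻¹ (-t - 2 * ∑ j, s j ^ 2) (-s) (Hmap n q t s x) = x := by
  rw [Hmap_Hmap hn, inv_mul_cancel₀ hq, neg_add_cancel]
  convert Hmap_one_zero_zero hn x
  simp only [sq, Pi.neg_apply, neg_mul, Finset.sum_neg_distrib]
  ring

lemma Hmap_Hmap_inv (hn : 3 ≤ n) {q : ℝ} (hq : q ≠ 0) (t : ℝ) (s : Fin (n - 2) → ℝ)
    (x : Fin (n + 1) → ℝ) :
    Hmap n q t s (Hmap n q⁻¹ (-t - 2 * ∑ j, s j ^ 2) (-s) x) = x := by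
  rw [Hmap_Hmap hn, mul_inv_cancel₀ hq, add_neg_cancel]
  convert Hmap_one_zero_zero hn x
  simp only [sq, Pi.neg_apply, mul_neg, Finset.sum_neg_distrib]
  ring

lemma Hmap_mapsTo (hn : 3 ≤ n) {q : ℝ} (hq : 0 < q) (t : ℝ) (s : Fin (n - 2) → ℝ) :
    Set.MapsTo (Hmap n q t s) (gammaSurf n hn) (gammaSurf n hn) := by
  intro x hx
  rw [mem_gammaSurf_iff] at hx ⊢
  refine ⟨by simpa using mul_pos hq hx.1, ?_⟩
  simp only [hn, Hmap_apply_last, Hmap_apply_zero, Hmap_apply_one, Hmap_apply_innerIdx,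
    sum_add_sq, mul_comm (s _), hx.2]
  ring

lemma Hmap_bijOn (hn : 3 ≤ n) {q : ℝ} (hq : 0 < q) (t : ℝ) (s : Fin (n - 2) → ℝ) :
    Set.BijOn (Hmap n q t s) (gammaSurf n hn) (gammaSurf n hn) :=
  Set.InvOn.bijOn
    ⟨fun x _ => Hmap_inv_Hmap hn hq.ne' t s x, fun x _ => Hmap_Hmap_inv hn hq.ne' t s x⟩
    (Hmap_mapsTo hn hq t s) (Hmap_mapsTo hn (inv_pos.2 hq) _ _)

lemma Hmap_basePoint_eq_iff (hn : 3 ≤ n) {x : Fin (n + 1) → ℝ} (hx : x ∈ gammaSurf n hn)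
    (q t : ℝ) (s : Fin (n - 2) → ℝ) :
    Hmap n q t s (fun i => if (i : ℕ) = 0 then 1 else 0) = x ↔
      (q, t, s) = (x 0, x ⟨1, by omega⟩, x ∘ innerIdx) := by
  constructor
  · rintro rfl
    simp only [Prod.mk.injEq]
    exact ⟨by simp, by simp [hn], funext fun j => by simp⟩
  · intro h
    simp only [Prod.mk.injEq] at h
    obtain ⟨rfl, rfl, rfl⟩ := h
    rw [mem_gammaSurf_iff] at hx
    funext i
    rcases eq_zero_or_one_or_last_or_innerIdx hn i with rfl | rfl | rfl | ⟨j, rfl⟩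
    · simp
    · simp [hn]
    · simp only [hn, Hmap_apply_last, Fin.val_eq_zero_iff, Fin.last_eq_zero_iff,
        show n ≠ 0 by omega, ↓reduceIte, Function.comp_apply, hx.2]
      ring
    · simp

end

/-- The maps `H_{q,t,s}` with `q > 0` map `Γ` bijectively onto `Γ`, and this group of
affine maps acts simply transitively on `Γ`: every `x ∈ Γ` is the image of
`(1, 0, …, 0)` under `H_{q,t,s}` for unique `q > 0`, `t ∈ ℝ`, `s ∈ ℝ^{n−2}`. -/
theorem Hmap_bijOn_and_simply_transitive (n : ℕ) (hn : 3 ≤ n) :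
    (∀ (q t : ℝ) (s : Fin (n - 2) → ℝ), 0 < q →
      Set.BijOn (Hmap n q t s) (gammaSurf n hn) (gammaSurf n hn)) ∧
    (∀ x ∈ gammaSurf n hn, ∃! p : ℝ × ℝ × (Fin (n - 2) → ℝ),
      0 < p.1 ∧ Hmap n p.1 p.2.1 p.2.2 (fun i => if (i : ℕ) = 0 then 1 else 0) = x) := by
  refine ⟨fun q t s hq => Hmap_bijOn hn hq t s, fun x hx => ?_⟩
  refine ⟨(x 0, x ⟨1, by omega⟩, x ∘ innerIdx),
    ⟨hx.1, (Hmap_basePoint_eq_iff hn hx _ _ _).2 rfl⟩, ?_⟩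
  rintro ⟨q, t, s⟩ ⟨-, h⟩
  exact (Hmap_basePoint_eq_iff hn hx q t s).1 h
end
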